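/- Let p ∈ ℕ and let β > 0 be a real number that is not an integer. There exists a real constant c ≠ 0, depending only on p and β, such that for every h > 0 the minimization problem min ∫_0^h (t^β − g(t))² dt over real polynomials g of degree at most p admits a unique minimizer g*, and g*(0) = c · h^β; in particular g*(0) ≠ 0. -/

import Mathlib

/-!
The best approximation is the orthogonal projection: the Gram form `(g, q) ↦ ∫ g q` is positive
definite on polynomials of degree `≤ p`, so the projection exists, and by Pythagoras it is the
unique minimiser. Since `(h t)^β = h^β t^β`, the projection on `[0, h]` is `h^β g₁(t / h)`,
where `g₁` is the projection on `[0, 1]`; hence `c = g₁(0)`.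

Testing the orthogonality against `t^k` turns it into the Hilbert-type system
`∑ⱼ aⱼ / (k + 1 + j) = 1 / (k + 1 + β)`, `k = 0, …, p`, for the coefficients of `g₁`.
If `a₀ = 0`, then `1 / (s + β)` would agree at the `p + 1` nodes `s = 1, …, p + 1` with a sum
of `p` partial fractions with poles at `-1, …, -p`; clearing denominators gives a polynomial of
degree `≤ p` with `p + 1` roots, which is therefore zero, but its value at `s = -β` is
`∏ⱼ (j - β) ≠ 0`. This replaces the Cauchy determinant.
-/

open MeasureTheory Polynomial Set

theorem exists_eq_of_sum_div_eq_one_div {K ι κ : Type*} [Field K] [DecidableEq ι] [Fintype κ]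
    {J : Finset ι} {x : κ → K} (hx : Function.Injective x) (hcard : J.card < Fintype.card κ)
    {c v : ι → K} {w : K} (hv : ∀ k, ∀ j ∈ J, x k + v j ≠ 0) (hw : ∀ k, x k + w ≠ 0)
    (h : ∀ k, ∑ j ∈ J, c j / (x k + v j) = 1 / (x k + w)) : ∃ j ∈ J, v j = w := by
  by_contra! hne
  -- `N(s) = ∏ⱼ (s + vⱼ) · (1 - (s + w) ∑ⱼ cⱼ / (s + vⱼ))` away from the poles
  set N : K[X] := ∏ j ∈ J, (X + C (v j)) -
    ∑ j ∈ J, C (c j) * ((X + C w) * ∏ i ∈ J.erase j, (X + C (v i))) with hN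
  have hdeg : N.natDegree ≤ J.card := by
    refine (natDegree_sub_le _ _).trans (max_le ?_ ?_)
    · exact (natDegree_prod_le _ _).trans (by simp)
    · refine natDegree_sum_le_of_forall_le _ _ fun j hj => (natDegree_C_mul_le _ _).trans ?_
      refine natDegree_mul_le.trans ?_
      have hprod : (∏ i ∈ J.erase j, (X + C (v i))).natDegree ≤ J.card - 1 :=
        (natDegree_prod_le _ _).trans (by simp [Finset.card_erase_of_mem hj])
      have := Finset.card_pos.mpr ⟨j, hj⟩
      rw [natDegree_X_add_C]
      omega
  have hroot : ∀ k, N.eval (x k) = 0 := by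
    intro k
    set P := ∏ j ∈ J, (x k + v j) with hP
    have herase : ∀ j ∈ J, ∏ i ∈ J.erase j, (x k + v i) = P / (x k + v j) := fun j hj => by
      rw [hP, ← Finset.mul_prod_erase J (fun i => x k + v i) hj,
        mul_div_cancel_left₀ _ (hv k j hj)]
    simp only [hN, eval_sub, eval_prod, eval_finsetSum, eval_mul, eval_add, eval_X, eval_C]
    rw [Finset.sum_congr rfl fun j hj => by rw [herase j hj]]
    calc P - ∑ j ∈ J, c j * ((x k + w) * (P / (x k + v j)))
        = P - (x k + w) * P * ∑ j ∈ J, c j / (x k + v j) := by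
          rw [Finset.mul_sum]; congr 1; exact Finset.sum_congr rfl fun j _ => by ring
      _ = 0 := by rw [h k]; field_simp [hw k]; ring
  have hN0 : N = 0 := eq_zero_of_natDegree_lt_card_of_eval_eq_zero N hx hroot (hdeg.trans_lt hcard)
  have hNw : N.eval (-w) = ∏ j ∈ J, (-w + v j) := by simp [hN, eval_prod, eval_finsetSum]
  rw [hN0, eval_zero, eq_comm, Finset.prod_eq_zero_iff] at hNw
  obtain ⟨j, hj, hzero⟩ := hNw
  exact hne j hj (by linear_combination hzero)

theorem setIntegral_eval_sq_pos {a b : ℝ} (hab : a < b) {q : ℝ[X]} (hq : q ≠ 0) :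
    0 < ∫ t in Ioc a b, q.eval t ^ 2 := by
  rw [setIntegral_pos_iff_support_of_nonneg_ae (.of_forall fun t => sq_nonneg _)
    (q.continuous.pow 2).integrableOn_Ioc]
  have hsupp :
      Function.support (fun t => q.eval t ^ 2) ∩ Ioc a b = Ioc a b \ {t | q.IsRoot t} := by
    ext t; simp [and_comm]
  rw [hsupp, measure_sdiff_null ((finite_setOfPred_isRoot hq).measure_zero _), Real.volume_Ioc]
  simpa using hab

theorem setIntegral_Ioc_zero_eq_mul_setIntegral_comp_mul {h : ℝ} (hh : 0 < h) (F : ℝ → ℝ) :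
    ∫ t in Ioc 0 h, F t = h * ∫ s in Ioc 0 1, F (h * s) := by
  rw [← intervalIntegral.integral_of_le hh.le, ← intervalIntegral.integral_of_le zero_le_one,
    intervalIntegral.integral_comp_mul_left F hh.ne', mul_zero, mul_one, smul_eq_mul,
    mul_inv_cancel_left₀ hh.ne']

theorem setIntegral_Ioc_zero_one_rpow {γ : ℝ} (hγ : -1 < γ) :
    ∫ t in Ioc 0 1, t ^ γ = 1 / (γ + 1) := by
  rw [← intervalIntegral.integral_of_le zero_le_one, integral_rpow (.inl hγ), Real.one_rpow,
    Real.zero_rpow (by linarith)]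
  ring

theorem natDegree_comp_C_mul_X_le {R : Type*} [Semiring R] (q : R[X]) (r : R) :
    (q.comp (C r * X)).natDegree ≤ q.natDegree :=
  natDegree_comp_le.trans <| mul_le_of_le_one_right' <|
    (natDegree_C_mul_le r X).trans natDegree_X_le

theorem mem_degreeLT_succ_iff {R : Type*} [Semiring R] {p : ℕ} {q : R[X]} :
    q ∈ R[X]_(p + 1) ↔ q.natDegree ≤ p := by
  rw [degreeLT_succ_eq_degreeLE, mem_degreeLE, natDegree_le_iff_degree_le]

def IsOrthogonalProjection (f : ℝ → ℝ) (a b : ℝ) (p : ℕ) (g : ℝ[X]) : Prop :=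
  g.natDegree ≤ p ∧
    ∀ q : ℝ[X], q.natDegree ≤ p → ∫ t in Ioc a b, (f t - g.eval t) * q.eval t = 0

def IsBestApproximation (f : ℝ → ℝ) (a b : ℝ) (p : ℕ) (g : ℝ[X]) : Prop :=
  ∀ q : ℝ[X], q.natDegree ≤ p →
    ∫ t in Ioc a b, (f t - g.eval t) ^ 2 ≤ ∫ t in Ioc a b, (f t - q.eval t) ^ 2

namespace IsOrthogonalProjection

variable {f : ℝ → ℝ} {a b : ℝ} {p : ℕ} {g : ℝ[X]}

theorem integral_sub_sq_eq (hf : Continuous f) (hg : IsOrthogonalProjection f a b p g)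
    {q : ℝ[X]} (hq : q.natDegree ≤ p) :
    ∫ t in Ioc a b, (f t - q.eval t) ^ 2
      = (∫ t in Ioc a b, (f t - g.eval t) ^ 2) + ∫ t in Ioc a b, (g - q).eval t ^ 2 := by
  have hexpand : ∀ t, (f t - q.eval t) ^ 2 = (f t - g.eval t) ^ 2
      + (2 * ((f t - g.eval t) * (g - q).eval t) + (g - q).eval t ^ 2) := by
    intro t; rw [eval_sub]; ring
  simp_rw [hexpand]
  rw [integral_add, integral_add, integral_const_mul,
    hg.2 _ ((natDegree_sub_le g q).trans (max_le hg.1 hq)), mul_zero, zero_add]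
  all_goals exact Continuous.integrableOn_Ioc (by fun_prop)

theorem isBestApproximation (hf : Continuous f) (hg : IsOrthogonalProjection f a b p g) :
    IsBestApproximation f a b p g := fun q hq => by
  rw [hg.integral_sub_sq_eq hf hq]
  exact le_add_of_nonneg_right (integral_nonneg fun t => sq_nonneg _)

theorem eq_of_isBestApproximation (hab : a < b) (hf : Continuous f)
    (hg : IsOrthogonalProjection f a b p g) {g' : ℝ[X]} (hg'p : g'.natDegree ≤ p)
    (hg' : IsBestApproximation f a b p g') : g' = g := by
  by_contra hne
  have hpos := setIntegral_eval_sq_pos hab (sub_ne_zero.mpr (Ne.symm hne))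
  have := hg' g hg.1
  rw [hg.integral_sub_sq_eq hf hg'p] at this
  linarith

end IsOrthogonalProjection

noncomputable def integralAgainst (a b : ℝ) {f : ℝ → ℝ} (hf : Continuous f) :
    ℝ[X] →ₗ[ℝ] ℝ where
  toFun q := ∫ t in Ioc a b, f t * q.eval t
  map_add' q r := by
    simp only [eval_add, mul_add]
    exact integral_add (Continuous.integrableOn_Ioc (by fun_prop))
      (Continuous.integrableOn_Ioc (by fun_prop))
  map_smul' c q := by
    simp only [eval_smul, smul_eq_mul, RingHom.id_apply, mul_left_comm _ c, integral_const_mul]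

noncomputable def integralPairing (a b : ℝ) : ℝ[X] →ₗ[ℝ] ℝ[X] →ₗ[ℝ] ℝ :=
  LinearMap.mk₂ ℝ (fun g q => integralAgainst a b g.continuous q)
    (fun g g' q => by
      simp only [integralAgainst, LinearMap.coe_mk, AddHom.coe_mk, eval_add, add_mul]
      exact integral_add (Continuous.integrableOn_Ioc (by fun_prop))
        (Continuous.integrableOn_Ioc (by fun_prop)))
    (fun c g q => by
      simp only [integralAgainst, LinearMap.coe_mk, AddHom.coe_mk, eval_smul, smul_eq_mul,
        mul_assoc, integral_const_mul])
    (fun g q r => map_add _ q r)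
    (fun c g q => map_smul _ c q)

theorem exists_isOrthogonalProjection {a b : ℝ} (hab : a < b) {f : ℝ → ℝ} (hf : Continuous f)
    (p : ℕ) : ∃ g, IsOrthogonalProjection f a b p g := by
  let B : LinearMap.BilinForm ℝ ℝ[X]_(p + 1) :=
    (integralPairing a b).domRestrict₁₂ ℝ[X]_(p + 1) ℝ[X]_(p + 1)
  have hB : B.Nondegenerate := LinearMap.BilinForm.Nondegenerate.ofSeparatingLeft fun g hg => by
    by_contra hne
    refine (setIntegral_eval_sq_pos hab (q := g) (by simpa using hne)).ne' ?_
    simp only [sq]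
    exact hg g
  let g := (B.toDual hB).symm ((integralAgainst a b hf).domRestrict ℝ[X]_(p + 1))
  refine ⟨g, mem_degreeLT_succ_iff.mp g.2, fun q hq => ?_⟩
  have hgq : ∫ t in Ioc a b, (g : ℝ[X]).eval t * q.eval t = ∫ t in Ioc a b, f t * q.eval t :=
    LinearMap.BilinForm.apply_toDual_symm_apply (B := B) (hB := hB) _
      (⟨q, mem_degreeLT_succ_iff.mpr hq⟩ : ℝ[X]_(p + 1))
  simp_rw [sub_mul]
  rw [integral_sub (Continuous.integrableOn_Ioc (by fun_prop))
    (Continuous.integrableOn_Ioc (by fun_prop)), hgq, sub_self]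

namespace IsOrthogonalProjection

variable {β : ℝ} {p : ℕ} {g : ℝ[X]}

theorem rescale_rpow {h : ℝ} (hh : 0 < h) (hg : IsOrthogonalProjection (· ^ β) 0 1 p g) :
    IsOrthogonalProjection (· ^ β) 0 h p (C (h ^ β) * g.comp (C h⁻¹ * X)) := by
  refine ⟨(natDegree_C_mul_le _ _).trans ((natDegree_comp_C_mul_X_le g _).trans hg.1),
    fun q hq => ?_⟩
  have hsubst : ∀ s ∈ Ioc (0 : ℝ) 1,
      ((h * s) ^ β - (C (h ^ β) * g.comp (C h⁻¹ * X)).eval (h * s)) * q.eval (h * s)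
        = h ^ β * ((s ^ β - g.eval s) * (q.comp (C h * X)).eval s) := fun s hs => by
    simp only [eval_mul, eval_C, eval_comp, eval_X, inv_mul_cancel_left₀ hh.ne',
      Real.mul_rpow hh.le hs.1.le]
    ring
  rw [setIntegral_Ioc_zero_eq_mul_setIntegral_comp_mul hh,
    setIntegral_congr_fun measurableSet_Ioc hsubst, integral_const_mul,
    hg.2 _ ((natDegree_comp_C_mul_X_le q h).trans hq), mul_zero, mul_zero]

theorem sum_coeff_div_eq (hβ : 0 ≤ β) (hg : IsOrthogonalProjection (· ^ β) 0 1 p g) {k : ℕ}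
    (hk : k ≤ p) :
    ∑ j ∈ Finset.range (p + 1), g.coeff j / ((k + 1 : ℝ) + j) = 1 / ((k + 1 : ℝ) + β) := by
  have hmoment := hg.2 (X ^ k) (by simpa using hk)
  simp only [eval_pow, eval_X, sub_mul] at hmoment
  have hcont := Real.continuous_rpow_const hβ
  rw [integral_sub (Continuous.integrableOn_Ioc (by fun_prop))
    (Continuous.integrableOn_Ioc (by fun_prop)), sub_eq_zero] at hmoment
  have hrpow : ∫ t in Ioc (0 : ℝ) 1, t ^ β * t ^ k = 1 / ((k + 1 : ℝ) + β) := by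
    rw [setIntegral_congr_fun measurableSet_Ioc fun t ht => by
      rw [← Real.rpow_natCast, ← Real.rpow_add ht.1], setIntegral_Ioc_zero_one_rpow
        (neg_one_lt_zero.trans_le (by positivity))]
    ring_nf
  have hpoly : ∫ t in Ioc (0 : ℝ) 1, g.eval t * t ^ k
      = ∑ j ∈ Finset.range (p + 1), g.coeff j / ((k + 1 : ℝ) + j) := by
    simp_rw [eval_eq_sum_range' (Nat.lt_succ_of_le hg.1), Finset.sum_mul]
    rw [integral_finsetSum _ fun j _ => Continuous.integrableOn_Ioc (by fun_prop)]
    refine Finset.sum_congr rfl fun j _ => ?_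
    rw [setIntegral_congr_fun measurableSet_Ioc fun t ht => by
      rw [mul_assoc, ← pow_add, ← Real.rpow_natCast], integral_const_mul,
      setIntegral_Ioc_zero_one_rpow (neg_one_lt_zero.trans_le (by positivity))]
    push_cast
    ring
  rw [← hrpow, ← hpoly, hmoment]

theorem eval_zero_ne_zero (hβ : 0 < β) (hnotint : ∀ n : ℕ, β ≠ n)
    (hg : IsOrthogonalProjection (· ^ β) 0 1 p g) : g.eval 0 ≠ 0 := by
  rw [← coeff_zero_eq_eval_zero]
  intro hcoeff
  obtain ⟨j, -, hj⟩ := exists_eq_of_sum_div_eq_one_div (J := (Finset.range (p + 1)).erase 0)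
    (x := fun k : Fin (p + 1) => (k + 1 : ℝ)) (c := fun j => g.coeff j) (v := fun j => (j : ℝ))
    (w := β) (fun k l hkl => Fin.ext (by simpa using hkl)) (by simp) (fun k j _ => by positivity)
    (fun k => by positivity) fun k => by
      rw [Finset.sum_erase _ (by simp [hcoeff])]
      exact hg.sum_coeff_div_eq hβ.le (Nat.lt_succ_iff.mp k.2)
  exact hnotint j hj.symm

end IsOrthogonalProjection

theorem projection_of_rpow_at_zero (p : ℕ) (β : ℝ) (hβ : 0 < β)
    (hnotint : ∀ n : ℕ, β ≠ (n : ℝ)) :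
    ∃ c : ℝ, c ≠ 0 ∧
      ∀ h : ℝ, 0 < h →
        ∃ g : Polynomial ℝ,
          g.natDegree ≤ p ∧
          (∀ q : Polynomial ℝ, q.natDegree ≤ p →
            ∫ t in Set.Ioc (0 : ℝ) h, (t ^ β - Polynomial.eval t g) ^ 2
              ≤ ∫ t in Set.Ioc (0 : ℝ) h, (t ^ β - Polynomial.eval t q) ^ 2) ∧
          (∀ g' : Polynomial ℝ, g'.natDegree ≤ p →
            (∀ q : Polynomial ℝ, q.natDegree ≤ p →
              ∫ t in Set.Ioc (0 : ℝ) h, (t ^ β - Polynomial.eval t g') ^ 2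
                ≤ ∫ t in Set.Ioc (0 : ℝ) h, (t ^ β - Polynomial.eval t q) ^ 2) →
            g' = g) ∧
          Polynomial.eval 0 g = c * h ^ β := by
  have hcont := Real.continuous_rpow_const hβ.le
  obtain ⟨g, hg⟩ := exists_isOrthogonalProjection zero_lt_one hcont p
  refine ⟨g.eval 0, hg.eval_zero_ne_zero hβ hnotint, fun h hh => ?_⟩
  have hgh := hg.rescale_rpow hh
  refine ⟨_, hgh.1, hgh.isBestApproximation hcont,
    fun g' hg'p hg' => hgh.eq_of_isBestApproximation hh hcont hg'p hg', ?_⟩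
  simp only [eval_mul, eval_C, eval_comp, eval_X, mul_zero, mul_comm]
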